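/- arXiv:1009.0979 — 4 statements merged into one kernel-verified Lean document; each statement's English description precedes it below -/
import Mathlib

section
/- Let μ, ν ∈ ℝ, λ ∈ ℂ, and consider the quadratic equation s² + μ·s − (λ − ν) = 0 over ℂ. If 16·μ²·(Re λ − ν) + (Im λ)² > 0, then this quadratic has one root with strictly positive real part and one root with strictly negative real part. -/
/-!
The roots are `(-μ ± w) / 2` with `w² = D := μ² + 4(λ - ν)`; choosing `Re w ≥ 0`, they have real
parts of opposite signs exactly when `|μ| < Re w`. Since `(Re w)² = (‖D‖ + Re D) / 2`, this amounts
to `μ² - 4(Re λ - ν) < ‖D‖`, and squaring shows that this holds as soon as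
`μ² (Re λ - ν) + (Im λ)² > 0`, which the hypothesis implies.
-/

namespace Complex

theorem exists_sq_eq_and_re_nonneg (z : ℂ) : ∃ w : ℂ, w ^ 2 = z ∧ 0 ≤ w.re := by
  obtain ⟨w, hw⟩ := IsAlgClosed.exists_pow_nat_eq z two_pos
  rcases le_total 0 w.re with hre | hre
  · exact ⟨w, hw, hre⟩
  · exact ⟨-w, by rw [neg_sq, hw], by simpa using hre⟩

theorem re_sq_of_sq_eq {w z : ℂ} (h : w ^ 2 = z) : w.re ^ 2 = (‖z‖ + z.re) / 2 := by
  have hnorm : ‖z‖ = w.re ^ 2 + w.im ^ 2 := by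
    rw [← h, norm_pow, Complex.sq_norm, normSq_apply]; ring
  have hre : z.re = w.re ^ 2 - w.im ^ 2 := by
    rw [← h]; simp only [sq, mul_re]
  rw [hnorm, hre]; ring

theorem sub_re_lt_norm_add {a : ℝ} {z : ℂ} (h : 0 < a * z.re + z.im ^ 2) :
    a - 4 * z.re < ‖(a : ℂ) + 4 * z‖ := by
  have hsq : ‖(a : ℂ) + 4 * z‖ ^ 2 = (a + 4 * z.re) ^ 2 + (4 * z.im) ^ 2 := by
    simp [Complex.sq_norm, normSq_apply]
    ring
  refine (le_abs_self _).trans_lt (abs_lt_of_sq_lt_sq ?_ (norm_nonneg _))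
  nlinarith

end Complex

theorem quadratic_eq_zero_of_sq_eq_discrim {b c w : ℂ} (h : w ^ 2 = b ^ 2 + 4 * c) :
    ((-b + w) / 2) ^ 2 + b * ((-b + w) / 2) - c = 0 := by
  linear_combination h / 4

theorem stmt_1 (μ ν : ℝ) (lam : ℂ)
    (h : 16 * μ^2 * (lam.re - ν) + lam.im^2 > 0) :
    ∃ s₁ s₂ : ℂ,
      s₁^2 + (μ : ℂ) * s₁ - (lam - (ν : ℂ)) = 0 ∧
      s₂^2 + (μ : ℂ) * s₂ - (lam - (ν : ℂ)) = 0 ∧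
      0 < s₁.re ∧ s₂.re < 0 := by
  set z := lam - (ν : ℂ)
  have hz : 0 < μ ^ 2 * z.re + z.im ^ 2 := by
    simp only [z, Complex.sub_re, Complex.sub_im, Complex.ofReal_re, Complex.ofReal_im, sub_zero]
    nlinarith [sq_nonneg lam.im]
  obtain ⟨w, hw, hw_re⟩ := Complex.exists_sq_eq_and_re_nonneg ((μ : ℂ) ^ 2 + 4 * z)
  have hμw : |μ| < w.re := by
    refine abs_lt_of_sq_lt_sq ?_ hw_re
    have hlt := Complex.sub_re_lt_norm_add hz
    push_cast at hlt
    have hD_re : ((μ : ℂ) ^ 2 + 4 * z).re = μ ^ 2 + 4 * z.re := by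
      simp [← Complex.ofReal_pow]
    rw [Complex.re_sq_of_sq_eq hw, hD_re]
    linarith
  obtain ⟨hμ_lo, hμ_hi⟩ := abs_lt.mp hμw
  refine ⟨(-μ + w) / 2, (-μ + -w) / 2, quadratic_eq_zero_of_sq_eq_discrim hw,
    quadratic_eq_zero_of_sq_eq_discrim (by rw [neg_sq, hw]), ?_, ?_⟩
  · simp only [Complex.div_ofNat_re, Complex.add_re, Complex.neg_re, Complex.ofReal_re]
    linarith
  · simp only [Complex.div_ofNat_re, Complex.add_re, Complex.neg_re, Complex.ofReal_re]
    linarith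
end

section
/- Let a ≠ 0 and μ, ν ∈ ℝ, λ ∈ ℂ. The indicial equation s(s−1) + (aμ+1)s + a²(ν−λ) = 0 simplifies to s² + aμs + a²(ν−λ) = 0, and if 16μ²(Re λ − ν) + (Im λ)² > 0 then this equation has one root with positive real part and one root with negative real part. -/
open Complex

/-- With `s₁ = x₁ + i y` and `s₂ = x₂ - i y` one has
`b² re(s₁ s₂) - im(s₁ s₂)² = x₁ x₂ ((x₁ + x₂)² + 4 y²)`, so the real parts have opposite signs. -/
lemma re_mul_re_neg_of_add_eq_ofReal {b : ℝ} {s₁ s₂ : ℂ} (hsum : s₁ + s₂ = -b)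
    (h : b ^ 2 * (s₁ * s₂).re < (s₁ * s₂).im ^ 2) : s₁.re * s₂.re < 0 := by
  have hre : b = -(s₁.re + s₂.re) := by
    linarith [show s₁.re + s₂.re = -b by simpa using congrArg re hsum]
  have him : s₂.im = -s₁.im := by
    linarith [show s₁.im + s₂.im = 0 by simpa using congrArg im hsum]
  have key : b ^ 2 * (s₁ * s₂).re - (s₁ * s₂).im ^ 2
      = s₁.re * s₂.re * ((s₁.re + s₂.re) ^ 2 + 4 * s₁.im ^ 2) := by
    rw [mul_re, mul_im, hre, him]; ring
  by_contra! hnonneg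
  have : 0 ≤ s₁.re * s₂.re * ((s₁.re + s₂.re) ^ 2 + 4 * s₁.im ^ 2) := by positivity
  linarith

lemma exists_quadratic_roots_re_pos_re_neg (b : ℝ) (c : ℂ) (h : b ^ 2 * c.re < c.im ^ 2) :
    ∃ s₁ s₂ : ℂ, s₁ ^ 2 + b * s₁ + c = 0 ∧ s₂ ^ 2 + b * s₂ + c = 0 ∧ 0 < s₁.re ∧ s₂.re < 0 := by
  obtain ⟨w, hw⟩ := IsAlgClosed.exists_eq_mul_self (discrim 1 (b : ℂ) c)
  obtain ⟨s, hs⟩ := exists_quadratic_eq_zero one_ne_zero ⟨w, hw⟩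
  have hs : s ^ 2 + b * s + c = 0 := by linear_combination hs
  have ht : (-b - s) ^ 2 + b * (-b - s) + c = 0 := by linear_combination hs
  have hprod : s * (-b - s) = c := by linear_combination -hs
  have hsign := re_mul_re_neg_of_add_eq_ofReal (s₂ := -b - s) (by ring) (hprod ▸ h)
  rcases mul_neg_iff.mp hsign with ⟨hpos, hneg⟩ | ⟨hneg, hpos⟩
  · exact ⟨s, -b - s, hs, ht, hpos, hneg⟩
  · exact ⟨-b - s, s, ht, hs, hpos, hneg⟩

theorem stmt_3 (a μ ν : ℝ) (lam : ℂ) (ha : a ≠ 0) :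
    (∀ s : ℂ, s * (s - 1) + ((a : ℂ) * μ + 1) * s + (a : ℂ)^2 * ((ν : ℂ) - lam)
        = s^2 + (a : ℂ) * μ * s + (a : ℂ)^2 * ((ν : ℂ) - lam)) ∧
    (16 * μ^2 * (lam.re - ν) + lam.im^2 > 0 →
      ∃ s₁ s₂ : ℂ,
        s₁^2 + (a : ℂ) * μ * s₁ + (a : ℂ)^2 * ((ν : ℂ) - lam) = 0 ∧
        s₂^2 + (a : ℂ) * μ * s₂ + (a : ℂ)^2 * ((ν : ℂ) - lam) = 0 ∧
        0 < s₁.re ∧ s₂.re < 0) := by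
  refine ⟨fun s => by ring, fun h => ?_⟩
  have hdisc : 0 < μ ^ 2 * (lam.re - ν) + lam.im ^ 2 := by
    rcases le_total 0 (μ ^ 2 * (lam.re - ν)) <;> nlinarith [sq_nonneg lam.im]
  have hcond : (a * μ) ^ 2 * ((a : ℂ) ^ 2 * (ν - lam)).re < ((a : ℂ) ^ 2 * (ν - lam)).im ^ 2 := by
    have hc : (a : ℂ) ^ 2 * (ν - lam)
        = ((a ^ 2 * (ν - lam.re) : ℝ) : ℂ) + (-(a ^ 2 * lam.im) : ℝ) * I := by
      apply Complex.ext <;> simp [pow_two]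
    have ha4 : 0 < a ^ 4 := by positivity
    rw [hc, add_re, add_im, ofReal_re, ofReal_im, re_ofReal_mul, im_ofReal_mul, I_re, I_im]
    nlinarith [mul_pos ha4 hdisc]
  simpa [mul_assoc] using exists_quadratic_roots_re_pos_re_neg (a * μ) _ hcond
end

section
/- Let α ∈ (1/3, 2/3) and λ = (3/2)α(α−1). The function ψ(x) = e^{(1−α)x/√2}/(e^{x/√2}+1) · (1 − (1/(1−α))·e^{x/√2}/(e^{x/√2}+1)) is a nonzero solution of ψ'' + √2(1/2 − α)ψ' + (−3φ(x)² + 2(α+1)φ(x) − α)ψ = λψ with φ(x) = 1/(e^{x/√2}+1), and satisfies lim_{x→±∞} ψ(x) = 0. -/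
/-!
In the variables t = x/√2 and y = φ = 1/(eᵗ + 1) one has y' = -y(1 - y) and
ψ = e^{(1-α)t} p(y) with the quadratic p(y) = y (1 - (1 - y)/(1 - α)).
Since (e^{at} p(y))' = e^{at} (a p - y(1 - y) p')(y), the eigenvalue equation for ψ becomes a
polynomial identity in y. For 0 < α < 1, ψ decays like e^{(1-α)t} at -∞ and, because
φ ≤ e^{-t}, like e^{-αt} at +∞.
-/

open Real Filter Topology

-- φ(x) = front (x / √2)
noncomputable def front (t : ℝ) : ℝ := 1 / (exp t + 1)

lemma hasDerivAt_front (t : ℝ) : HasDerivAt front (-(front t * (1 - front t))) t := by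
  unfold front
  simp only [one_div]
  refine (((hasDerivAt_exp t).add_const 1).inv (by positivity)).congr_deriv ?_
  field_simp
  ring

lemma tendsto_front_atBot : Tendsto front atBot (𝓝 1) := by
  unfold front
  simpa only [one_div, zero_add, inv_one] using (tendsto_exp_atBot.add_const 1).inv₀ (by norm_num)

lemma tendsto_front_atTop : Tendsto front atTop (𝓝 0) := by
  unfold front
  simp only [one_div]
  exact (tendsto_atTop_add_const_right _ 1 tendsto_exp_atTop).inv_tendsto_atTop

lemma tendsto_exp_mul_mul_front_atBot {a : ℝ} (ha : 0 < a) :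
    Tendsto (fun t => exp (a * t) * front t) atBot (𝓝 0) := by
  simpa using (tendsto_exp_atBot.comp (tendsto_id.const_mul_atBot ha)).mul tendsto_front_atBot

lemma tendsto_exp_mul_mul_front_atTop {a : ℝ} (ha : a < 1) :
    Tendsto (fun t => exp (a * t) * front t) atTop (𝓝 0) := by
  have hdecay : Tendsto (fun t => exp ((a - 1) * t)) atTop (𝓝 0) :=
    tendsto_exp_atBot.comp (tendsto_id.const_mul_atTop_of_neg (by linarith))
  refine squeeze_zero (fun t => by unfold front; positivity) (fun t => ?_) hdecay
  calc exp (a * t) * front t ≤ exp (a * t) * exp (-t) := by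
        unfold front
        gcongr
        rw [exp_neg, one_div]
        gcongr
        linarith
    _ = exp ((a - 1) * t) := by rw [← exp_add]; congr 1; ring

section ExpMulFront

variable (a : ℝ) {p p' p'' : ℝ → ℝ}

lemma hasDerivAt_exp_mul_comp_front {d t : ℝ} (hp : HasDerivAt p d (front t)) :
    HasDerivAt (fun t => exp (a * t) * p (front t))
      (exp (a * t) * (a * p (front t) - front t * (1 - front t) * d)) t := by
  have hexp : HasDerivAt (fun t => exp (a * t)) (exp (a * t) * a) t :=
    ((hasDerivAt_id t).const_mul a).exp.congr_deriv (by simp)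
  exact (hexp.mul (hp.comp t (hasDerivAt_front t))).congr_deriv
    (by simp only [Function.comp_apply]; ring)

lemma deriv_exp_mul_comp_front (hp : ∀ y, HasDerivAt p (p' y) y) :
    deriv (fun t => exp (a * t) * p (front t)) =
      fun t => exp (a * t) * (a * p (front t) - front t * (1 - front t) * p' (front t)) :=
  funext fun _ => (hasDerivAt_exp_mul_comp_front a (hp _)).deriv

lemma deriv_deriv_exp_mul_comp_front (hp : ∀ y, HasDerivAt p (p' y) y)
    (hp' : ∀ y, HasDerivAt p' (p'' y) y) (t : ℝ) :
    deriv (deriv (fun t => exp (a * t) * p (front t))) t =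
      exp (a * t) * (a ^ 2 * p (front t)
        + front t * (1 - front t) * (1 - 2 * front t - 2 * a) * p' (front t)
        + (front t * (1 - front t)) ^ 2 * p'' (front t)) := by
  have hq : HasDerivAt (fun y => a * p y - y * (1 - y) * p' y)
      (a * p' (front t) - ((1 - 2 * front t) * p' (front t) + front t * (1 - front t) * p'' (front t)))
      (front t) := by
    have hy : HasDerivAt (fun y : ℝ => y * (1 - y)) (1 - 2 * front t) (front t) :=
      ((hasDerivAt_id' _).mul ((hasDerivAt_id' _).const_sub 1)).congr_deriv (by ring)
    exact ((hp _).const_mul a).sub (hy.mul (hp' _))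
  rw [deriv_exp_mul_comp_front a hp, (hasDerivAt_exp_mul_comp_front a hq).deriv]
  ring

end ExpMulFront

lemma deriv_comp_div_const (f : ℝ → ℝ) (s : ℝ) :
    deriv (fun x => f (x / s)) = fun x => deriv f (x / s) / s := by
  funext x
  simpa [div_eq_inv_mul] using deriv_comp_mul_left s⁻¹ f x

lemma deriv_deriv_comp_div_const (f : ℝ → ℝ) (s x : ℝ) :
    deriv (deriv (fun x => f (x / s))) x = deriv (deriv f) (x / s) / s / s := by
  rw [deriv_comp_div_const, deriv_div_const, deriv_comp_div_const]

def frontFactor (c y : ℝ) : ℝ := y * (1 - c * (1 - y))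

lemma hasDerivAt_frontFactor (c y : ℝ) : HasDerivAt (frontFactor c) (1 - c + 2 * c * y) y :=
  ((hasDerivAt_id' y).mul ((((hasDerivAt_id' y).const_sub 1).const_mul c).const_sub 1)).congr_deriv
    (by ring)

lemma hasDerivAt_frontFactor_deriv (c y : ℝ) :
    HasDerivAt (fun y => 1 - c + 2 * c * y) (2 * c) y :=
  (((hasDerivAt_id' y).const_mul (2 * c)).const_add (1 - c)).congr_deriv (by ring)

noncomputable def profile (α t : ℝ) : ℝ := exp ((1 - α) * t) * frontFactor (1 / (1 - α)) (front t)

lemma frontFactor_ode {α c : ℝ} (hc : c * (1 - α) = 1) (y : ℝ) :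
    (1 / 2) * ((1 - α) ^ 2 * frontFactor c y
        + y * (1 - y) * (1 - 2 * y - 2 * (1 - α)) * (1 - c + 2 * c * y)
        + (y * (1 - y)) ^ 2 * (2 * c))
      + (1 / 2 - α) * ((1 - α) * frontFactor c y - y * (1 - y) * (1 - c + 2 * c * y))
      + (-3 * y ^ 2 + 2 * (α + 1) * y - α) * frontFactor c y
      = (3 / 2) * α * (α - 1) * frontFactor c y := by
  unfold frontFactor
  -- both sides are affine in c, so the difference is its value at c = 0 times (1 - c (1 - α))
  linear_combination (-((1 / 2) * ((1 - α) ^ 2 * y + y * (1 - y) * (1 - 2 * y - 2 * (1 - α)))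
    + (1 / 2 - α) * ((1 - α) * y - y * (1 - y)) + (-3 * y ^ 2 + 2 * (α + 1) * y - α) * y
    - (3 / 2) * α * (α - 1) * y)) * hc

lemma profile_ode {α : ℝ} (hα : α ≠ 1) (t : ℝ) :
    (1 / 2) * deriv (deriv (profile α)) t + (1 / 2 - α) * deriv (profile α) t
      + (-3 * front t ^ 2 + 2 * (α + 1) * front t - α) * profile α t
      = (3 / 2) * α * (α - 1) * profile α t := by
  have hc : 1 / (1 - α) * (1 - α) = 1 := one_div_mul_cancel (sub_ne_zero.mpr hα.symm)
  have h2 := deriv_deriv_exp_mul_comp_front (1 - α) (hasDerivAt_frontFactor (1 / (1 - α)))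
    (hasDerivAt_frontFactor_deriv (1 / (1 - α))) t
  have h1 := congrFun (deriv_exp_mul_comp_front (1 - α) (hasDerivAt_frontFactor (1 / (1 - α)))) t
  unfold profile
  rw [h2, h1]
  linear_combination exp ((1 - α) * t) * frontFactor_ode hc (front t)

lemma tendsto_profile_atBot {α : ℝ} (hα : α < 1) : Tendsto (profile α) atBot (𝓝 0) := by
  have h := (tendsto_exp_mul_mul_front_atBot (sub_pos.mpr hα)).mul
    ((tendsto_front_atBot.const_sub 1).const_mul (1 / (1 - α)) |>.const_sub 1)
  rw [zero_mul] at h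
  exact h.congr fun t => by simp only [profile, frontFactor]; ring

lemma tendsto_profile_atTop {α : ℝ} (hα : 0 < α) : Tendsto (profile α) atTop (𝓝 0) := by
  have h := (tendsto_exp_mul_mul_front_atTop (a := 1 - α) (by linarith)).mul
    ((tendsto_front_atTop.const_sub 1).const_mul (1 / (1 - α)) |>.const_sub 1)
  rw [zero_mul] at h
  exact h.congr fun t => by simp only [profile, frontFactor]; ring

lemma front_zero : front 0 = 1 / 2 := by norm_num [front]

lemma front_log_two : front (log 2) = 1 / 3 := by norm_num [front, exp_log]

lemma exists_profile_ne_zero (α : ℝ) : ∃ t, profile α t ≠ 0 := by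
  suffices ∃ t, frontFactor (1 / (1 - α)) (front t) ≠ 0 by
    obtain ⟨t, ht⟩ := this
    exact ⟨t, mul_ne_zero (exp_pos _).ne' ht⟩
  -- `frontFactor c` cannot vanish at both y = 1/2 and y = 1/3
  by_cases hc : 1 / (1 - α) = 2
  · refine ⟨log 2, ?_⟩
    rw [front_log_two, hc, frontFactor]; norm_num
  · refine ⟨0, ?_⟩
    rw [front_zero, frontFactor]
    intro h
    apply hc
    linarith [(mul_eq_zero.mp h).resolve_left (by norm_num)]

lemma profile_div_eq (α x s : ℝ) :
    profile α (x / s) = exp ((1 - α) * x / s) / (exp (x / s) + 1) *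
      (1 - (1 / (1 - α)) * (exp (x / s) / (exp (x / s) + 1))) := by
  have : exp (x / s) + 1 ≠ 0 := by positivity
  rw [profile, frontFactor, front, mul_div_assoc]
  field_simp
  ring

theorem stmt_10 (α : ℝ) (hα : α ∈ Set.Ioo (1/3 : ℝ) (2/3))
    (lam : ℝ) (hlam : lam = (3/2) * α * (α - 1)) :
    (fun x : ℝ => exp ((1 - α) * x / Real.sqrt 2) / (exp (x / Real.sqrt 2) + 1) *
        (1 - (1 / (1 - α)) * (exp (x / Real.sqrt 2) / (exp (x / Real.sqrt 2) + 1)))) ≠ 0 ∧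
    (∀ x : ℝ,
      deriv (deriv (fun x : ℝ =>
          exp ((1 - α) * x / Real.sqrt 2) / (exp (x / Real.sqrt 2) + 1) *
            (1 - (1 / (1 - α)) * (exp (x / Real.sqrt 2) / (exp (x / Real.sqrt 2) + 1))))) x
        + Real.sqrt 2 * (1/2 - α) *
          deriv (fun x : ℝ =>
            exp ((1 - α) * x / Real.sqrt 2) / (exp (x / Real.sqrt 2) + 1) *
              (1 - (1 / (1 - α)) * (exp (x / Real.sqrt 2) / (exp (x / Real.sqrt 2) + 1)))) x
        + (-3 * (1 / (exp (x / Real.sqrt 2) + 1))^2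
            + 2 * (α + 1) * (1 / (exp (x / Real.sqrt 2) + 1)) - α) *
          (exp ((1 - α) * x / Real.sqrt 2) / (exp (x / Real.sqrt 2) + 1) *
            (1 - (1 / (1 - α)) * (exp (x / Real.sqrt 2) / (exp (x / Real.sqrt 2) + 1))))
        = lam * (exp ((1 - α) * x / Real.sqrt 2) / (exp (x / Real.sqrt 2) + 1) *
            (1 - (1 / (1 - α)) * (exp (x / Real.sqrt 2) / (exp (x / Real.sqrt 2) + 1))))) ∧
    Tendsto (fun x : ℝ => exp ((1 - α) * x / Real.sqrt 2) / (exp (x / Real.sqrt 2) + 1) *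
        (1 - (1 / (1 - α)) * (exp (x / Real.sqrt 2) / (exp (x / Real.sqrt 2) + 1))))
      atBot (nhds 0) ∧
    Tendsto (fun x : ℝ => exp ((1 - α) * x / Real.sqrt 2) / (exp (x / Real.sqrt 2) + 1) *
        (1 - (1 / (1 - α)) * (exp (x / Real.sqrt 2) / (exp (x / Real.sqrt 2) + 1))))
      atTop (nhds 0) := by
  obtain ⟨hα₁, hα₂⟩ := hα
  have hs : 0 < √2 := by positivity
  simp only [← profile_div_eq]
  refine ⟨?_, fun x => ?_, (tendsto_profile_atBot (by linarith)).comp (tendsto_id.atBot_div_const hs),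
    (tendsto_profile_atTop (by linarith)).comp (tendsto_id.atTop_div_const hs)⟩
  · obtain ⟨t, ht⟩ := exists_profile_ne_zero α
    intro h
    exact ht (by simpa [hs.ne'] using congrFun h (√2 * t))
  · rw [deriv_deriv_comp_div_const, deriv_comp_div_const, hlam, ← profile_ode (by linarith) (x / √2)]
    have h2 : √2 * √2 = 2 := mul_self_sqrt zero_le_two
    simp only [front]
    rw [div_div, h2]
    field_simp
end

section
/- Let k be an integer and α ∈ ℝ. If √(8λ + (2α−3)²) + √(8λ + (2α+1)²) = 2k with both square roots real and nonnegative (so 2k > 0), then λ = (k²−4)(k+1−2α)(k−1+2α)/(8k²). -/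
theorem stmt_13 (k : ℤ) (α lam : ℝ)
    (h₁ : 0 ≤ 8 * lam + (2*α - 3)^2) (h₂ : 0 ≤ 8 * lam + (2*α + 1)^2)
    (hk : 0 < k)
    (h : Real.sqrt (8 * lam + (2*α - 3)^2) + Real.sqrt (8 * lam + (2*α + 1)^2)
          = 2 * (k : ℝ)) :
    lam = ((k:ℝ)^2 - 4) * ((k:ℝ) + 1 - 2*α) * ((k:ℝ) - 1 + 2*α) / (8 * (k:ℝ)^2) := by
  set a := Real.sqrt (8 * lam + (2*α - 3)^2) with hadef
  set b := Real.sqrt (8 * lam + (2*α + 1)^2) with hbdef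
  have ha : a^2 = 8 * lam + (2*α - 3)^2 := Real.sq_sqrt h₁
  have hb : b^2 = 8 * lam + (2*α + 1)^2 := Real.sq_sqrt h₂
  have hk' : (0:ℝ) < (k:ℝ) := by exact_mod_cast hk
  have hk0 : (k:ℝ) ≠ 0 := ne_of_gt hk'
  have hd : (a - b) * (a + b) = 8 - 16*α := by linear_combination ha - hb
  rw [h] at hd
  -- from hd and h: a*k = k^2 + 2 - 4α
  have hak : a * (k:ℝ) = (k:ℝ)^2 + 2 - 4*α := by linear_combination hd/4 + (k:ℝ)/2 * h
  field_simp
  linear_combination (-(k:ℝ)^2) * ha + (a * (k:ℝ) + (k:ℝ)^2 + 2 - 4*α) * hak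
end
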